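/- arXiv:2305.03875 — 2 statements merged into one kernel-verified Lean document; each statement's English description precedes it below -/
import Mathlib

section
/- Mixed product property for tensor–matrix multiplication: for k-th order tensors B, C and matrices X, Y of compatible sizes, (B ⊗ C) ×_p (X ⊗ Y) = (B ×_p X) ⊗ (C ×_p Y), where ×_p denotes mode-p multiplication and X ⊗ Y is the matrix Kronecker product. -/
/-- Tensor Kronecker product of two order-`k` tensors, indexed by paired index families. -/
def tkron {k : ℕ} {ι κ : Fin k → Type} (B : (∀ q, ι q) → ℝ) (C : (∀ q, κ q) → ℝ) :
    (∀ q, ι q × κ q) → ℝ :=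
  fun idx => B (fun q => (idx q).1) * C (fun q => (idx q).2)

/-- Matrix Kronecker product `(X ⊗ Y)_{(i,j),(a,b)} = X_{ia} Y_{jb}`. -/
def matKron {α β γ δ : Type} (X : α → β → ℝ) (Y : γ → δ → ℝ) : α × γ → β × δ → ℝ :=
  fun a b => X a.1 b.1 * Y a.2 b.2

/-- Mode-`p` product of a tensor with a matrix `A : κ → ι p → ℝ`:
`(T ×_p A)_{j₁…j_{p-1} i j_{p+1}…j_k} = Σ_{j_p} T_{j₁…j_p…j_k} A_{i j_p}`. -/
def modeProd {k : ℕ} {ι : Fin k → Type} [∀ q, Fintype (ι q)] (p : Fin k) {κ : Type}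
    (T : (∀ q, ι q) → ℝ) (A : κ → ι p → ℝ) :
    (∀ q, Function.update ι p κ q) → ℝ :=
  fun idx => ∑ j : ι p,
    A (cast (Function.update_self p κ ι) (idx p)) j *
      T (fun q =>
        if h : q = p then cast (congrArg ι h).symm j
        else cast (Function.update_of_ne h κ ι) (idx q))

/-- Mixed product property for tensor–matrix (mode-`p`) multiplication:
`(B ⊗ C) ×_p (X ⊗ Y) = (B ×_p X) ⊗ (C ×_p Y)`, up to the canonical identification
of index sets. -/
theorem mixed_modeProd {k : ℕ} {ι ι' : Fin k → Type}
    [∀ q, Fintype (ι q)] [∀ q, Fintype (ι' q)] (p : Fin k) {κ κ' : Type}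
    (B : (∀ q, ι q) → ℝ) (C : (∀ q, ι' q) → ℝ)
    (X : κ → ι p → ℝ) (Y : κ' → ι' p → ℝ) :
    ∀ (idx₁ : ∀ q, Function.update ι p κ q) (idx₂ : ∀ q, Function.update ι' p κ' q),
      modeProd p (tkron B C) (matKron X Y)
        (fun q =>
          if h : q = p then
            cast (show (κ × κ') = Function.update (fun r => ι r × ι' r) p (κ × κ') q by
                subst h; simp)
              ((cast (show Function.update ι p κ q = κ by subst h; simp) (idx₁ q),
                cast (show Function.update ι' p κ' q = κ' by subst h; simp) (idx₂ q)))
          else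
            cast (Function.update_of_ne h (κ × κ') (fun r => ι r × ι' r)).symm
              ((cast (Function.update_of_ne h κ ι) (idx₁ q),
                cast (Function.update_of_ne h κ' ι') (idx₂ q))))
      = tkron (modeProd p B X) (modeProd p C Y) (fun q => (idx₁ q, idx₂ q)) := by
  intro idx₁ idx₂
  simp only [modeProd, tkron, matKron]
  rw [Finset.sum_mul_sum]
  rw [← Fintype.sum_prod_type']
  refine Finset.sum_congr rfl fun j _ => ?_
  obtain ⟨j₁, j₂⟩ := j
  simp only [eq_self_iff_true, dite_true, cast_cast, cast_eq]
  rw [mul_mul_mul_comm]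
  congr 1
  · congr 1
    refine congrArg B (funext fun q => ?_)
    by_cases h : q = p
    · subst h; simp
    · simp only [dif_neg h, cast_cast, cast_eq]
  · congr 1
    refine congrArg C (funext fun q => ?_)
    by_cases h : q = p
    · subst h; simp
    · simp only [dif_neg h, cast_cast, cast_eq]
end

section
/- If (α, w, x) is an M-eigentriple of B and (β, y, z) is an M-eigentriple of C, then (αβ, w ⊗ y, x ⊗ z) is an M-eigentriple of B ⊗ C. -/
private lemma sum_arrow_prod' {A B' γ : Type*} [Fintype A] [Fintype B'] [Fintype γ]
    [DecidableEq γ] (F : (γ → A × B') → ℝ) :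
    ∑ f : γ → A × B', F f =
      ∑ g : γ → A, ∑ h : γ → B', F (fun c => (g c, h c)) := by
  rw [← Equiv.sum_comp (Equiv.arrowProdEquivProdArrow γ (fun _ => A) (fun _ => B')).symm, Fintype.sum_prod_type]
  rfl

private lemma cons_fst' {A B' : Type*} {k : ℕ} (i : A × B') (f : Fin k → A) (g : Fin k → B') :
    (fun p => ((Fin.cons i (fun q => (f q, g q)) : Fin (k+1) → A × B') p).1) = Fin.cons i.1 f := by
  funext p
  induction p using Fin.cases <;> simp

private lemma cons_snd' {A B' : Type*} {k : ℕ} (i : A × B') (f : Fin k → A) (g : Fin k → B') :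
    (fun p => ((Fin.cons i (fun q => (f q, g q)) : Fin (k+1) → A × B') p).2) = Fin.cons i.2 g := by
  funext p
  induction p using Fin.cases <;> simp

/-- Kronecker product of order-`2(k+1)` tensors whose modes are grouped into `x`-modes and
`y`-modes: `(B ⊗ C)` is indexed by paired indices in every mode. -/
def tkron2 {n m k : ℕ}
    (B : (Fin (k + 1) → Fin n) → (Fin (k + 1) → Fin n) → ℝ)
    (C : (Fin (k + 1) → Fin m) → (Fin (k + 1) → Fin m) → ℝ) :
    (Fin (k + 1) → Fin n × Fin m) → (Fin (k + 1) → Fin n × Fin m) → ℝ :=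
  fun a b => B (fun p => (a p).1) (fun p => (b p).1) * C (fun p => (a p).2) (fun p => (b p).2)

/-- `T x^{k} y^{k-1}`: contract all `x`-modes with `x` and all but one `y`-mode with `y`,
yielding a vector indexed by the remaining `y`-mode. -/
def contractY {α : Type*} [Fintype α] {k : ℕ}
    (T : (Fin (k + 1) → α) → (Fin (k + 1) → α) → ℝ) (x y : α → ℝ) (i : α) : ℝ :=
  ∑ a : Fin (k + 1) → α, ∑ b : Fin k → α,
    T a (Fin.cons i b) * (∏ p, x (a p)) * ∏ p, y (b p)

/-- `T y^{k} x^{k-1}`: contract all `y`-modes with `y` and all but one `x`-mode with `x`. -/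
def contractX {α : Type*} [Fintype α] {k : ℕ}
    (T : (Fin (k + 1) → α) → (Fin (k + 1) → α) → ℝ) (x y : α → ℝ) (i : α) : ℝ :=
  ∑ a : Fin k → α, ∑ b : Fin (k + 1) → α,
    T (Fin.cons i a) b * (∏ p, x (a p)) * ∏ p, y (b p)


private lemma keyY' {k n m : ℕ}
    (B : (Fin (k + 1) → Fin n) → (Fin (k + 1) → Fin n) → ℝ)
    (C : (Fin (k + 1) → Fin m) → (Fin (k + 1) → Fin m) → ℝ)
    (w x : Fin n → ℝ) (y z : Fin m → ℝ) (i : Fin n × Fin m) :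
    contractY (tkron2 B C) (fun a => w a.1 * y a.2) (fun a => x a.1 * z a.2) i
      = contractY B w x i.1 * contractY C y z i.2 := by
  unfold contractY tkron2
  simp only [sum_arrow_prod', cons_fst', cons_snd', Finset.prod_mul_distrib]
  rw [show ((∑ a : Fin (k + 1) → Fin n,
        ∑ b : Fin k → Fin n, B a (Fin.cons i.1 b) * (∏ p : Fin (k + 1), w (a p)) * ∏ p : Fin k, x (b p)) *
      ∑ a : Fin (k + 1) → Fin m,
        ∑ b : Fin k → Fin m, C a (Fin.cons i.2 b) * (∏ p : Fin (k + 1), y (a p)) * ∏ p : Fin k, z (b p))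
    = ∑ a : Fin (k + 1) → Fin n, ∑ c : Fin (k + 1) → Fin m,
        ∑ b : Fin k → Fin n, ∑ d : Fin k → Fin m,
          (B a (Fin.cons i.1 b) * (∏ p : Fin (k + 1), w (a p)) * ∏ p : Fin k, x (b p)) *
          (C c (Fin.cons i.2 d) * (∏ p : Fin (k + 1), y (c p)) * ∏ p : Fin k, z (d p)) from by
      rw [Fintype.sum_mul_sum]
      refine Finset.sum_congr rfl fun a _ => ?_
      rw [Finset.sum_comm]
      simp only [Finset.sum_mul, Finset.mul_sum]
      conv_lhs => enter [2]; ext x1; rw [Finset.sum_comm]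
      rw [Finset.sum_comm]]
  refine Finset.sum_congr rfl fun g _ => Finset.sum_congr rfl fun h _ =>
    Finset.sum_congr rfl fun b1 _ => Finset.sum_congr rfl fun b2 _ => ?_
  ring

private lemma contractX_eq_contractY {α : Type*} [Fintype α] {k : ℕ}
    (T : (Fin (k + 1) → α) → (Fin (k + 1) → α) → ℝ) (x y : α → ℝ) (i : α) :
    contractX T x y i = contractY (fun a b => T b a) y x i := by
  unfold contractX contractY
  rw [Finset.sum_comm]
  exact Finset.sum_congr rfl fun a _ => Finset.sum_congr rfl fun b _ => by ring

private lemma keyX' {k n m : ℕ}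
    (B : (Fin (k + 1) → Fin n) → (Fin (k + 1) → Fin n) → ℝ)
    (C : (Fin (k + 1) → Fin m) → (Fin (k + 1) → Fin m) → ℝ)
    (w x : Fin n → ℝ) (y z : Fin m → ℝ) (i : Fin n × Fin m) :
    contractX (tkron2 B C) (fun a => w a.1 * y a.2) (fun a => x a.1 * z a.2) i
      = contractX B w x i.1 * contractX C y z i.2 := by
  rw [contractX_eq_contractY, contractX_eq_contractY, contractX_eq_contractY]
  have h : (fun a b => tkron2 B C b a)
      = tkron2 (fun a b => B b a) (fun a b => C b a) := rfl
  rw [h, keyY']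

/-- M-eigentriples multiply under the Kronecker product: if `(α, w, x)` is an
M-eigentriple of `B` and `(β, y, z)` one of `C`, then `(αβ, w ⊗ y, x ⊗ z)` is an
M-eigentriple of `B ⊗ C` (in particular the Kronecker vectors are again unit vectors). -/
theorem tkron_M_eigentriple {k n m : ℕ}
    (B : (Fin (k + 1) → Fin n) → (Fin (k + 1) → Fin n) → ℝ)
    (C : (Fin (k + 1) → Fin m) → (Fin (k + 1) → Fin m) → ℝ)
    (α β : ℝ) (w x : Fin n → ℝ) (y z : Fin m → ℝ)
    (hw : ∑ i, (w i) ^ 2 = 1) (hx : ∑ i, (x i) ^ 2 = 1)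
    (hy : ∑ i, (y i) ^ 2 = 1) (hz : ∑ i, (z i) ^ 2 = 1)
    (hB1 : ∀ i, contractY B w x i = α * x i)
    (hB2 : ∀ i, contractX B w x i = α * w i)
    (hC1 : ∀ i, contractY C y z i = β * z i)
    (hC2 : ∀ i, contractX C y z i = β * y i) :
    (∑ i : Fin n × Fin m, (w i.1 * y i.2) ^ 2 = 1) ∧
    (∑ i : Fin n × Fin m, (x i.1 * z i.2) ^ 2 = 1) ∧
    (∀ i : Fin n × Fin m,
      contractY (tkron2 B C) (fun a => w a.1 * y a.2) (fun a => x a.1 * z a.2) i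
        = (α * β) * (x i.1 * z i.2)) ∧
    (∀ i : Fin n × Fin m,
      contractX (tkron2 B C) (fun a => w a.1 * y a.2) (fun a => x a.1 * z a.2) i
        = (α * β) * (w i.1 * y i.2)) := by
  have hnorm : ∀ (u : Fin n → ℝ) (v : Fin m → ℝ), (∑ i, u i ^ 2 = 1) → (∑ i, v i ^ 2 = 1) →
      ∑ i : Fin n × Fin m, (u i.1 * v i.2) ^ 2 = 1 := by
    intro u v hu hv
    rw [Fintype.sum_prod_type]
    simp only [mul_pow, ← Finset.mul_sum, hv, mul_one, hu]
  refine ⟨hnorm w y hw hy, hnorm x z hx hz, fun i => ?_, fun i => ?_⟩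
  · rw [keyY', hB1, hC1]; ring
  · rw [keyX', hB2, hC2]; ring
end
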